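/- arXiv:2305.10065 — 2 statements merged into one kernel-verified Lean document; each statement's English description precedes it below -/
import Mathlib

section
/- Let E₁ be an (n × n) real matrix, E₂ an (n × a) matrix, Ẽ₃ a (g × n) matrix, and Ẽ₄ a (g × a) matrix with full column rank. Then there exists h₀ > 0 such that for all h with 0 < h < h₀, the block matrix [[hE₁ − I, hE₂], [Ẽ₃, Ẽ₄]] has full column rank. -/
open Matrix

theorem stmt_6 (n a g : ℕ)
    (E₁ : Matrix (Fin n) (Fin n) ℝ) (E₂ : Matrix (Fin n) (Fin a) ℝ)
    (E₃ : Matrix (Fin g) (Fin n) ℝ) (E₄ : Matrix (Fin g) (Fin a) ℝ)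
    (hE₄ : ∀ x : Fin a → ℝ, E₄.mulVec x = 0 → x = 0) :
    ∃ h₀ : ℝ, 0 < h₀ ∧ ∀ h : ℝ, 0 < h → h < h₀ →
      ∀ x : Fin n ⊕ Fin a → ℝ,
        (Matrix.fromBlocks (h • E₁ - 1) (h • E₂) E₃ E₄).mulVec x = 0 → x = 0 := by
  classical
  obtain ⟨N₁, hN₁, hN₁'⟩ : ∃ N, 0 ≤ N ∧ ∀ y : Fin n → ℝ, ‖E₁.mulVec y‖ ≤ N * ‖y‖ :=
    ⟨‖(Matrix.mulVecLin E₁).toContinuousLinearMap‖, norm_nonneg _,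
      fun y => ((Matrix.mulVecLin E₁).toContinuousLinearMap).le_opNorm y⟩
  obtain ⟨N₂, hN₂, hN₂'⟩ : ∃ N, 0 ≤ N ∧ ∀ y : Fin a → ℝ, ‖E₂.mulVec y‖ ≤ N * ‖y‖ :=
    ⟨‖(Matrix.mulVecLin E₂).toContinuousLinearMap‖, norm_nonneg _,
      fun y => ((Matrix.mulVecLin E₂).toContinuousLinearMap).le_opNorm y⟩
  obtain ⟨N₃, hN₃, hN₃'⟩ : ∃ N, 0 ≤ N ∧ ∀ y : Fin n → ℝ, ‖E₃.mulVec y‖ ≤ N * ‖y‖ :=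
    ⟨‖(Matrix.mulVecLin E₃).toContinuousLinearMap‖, norm_nonneg _,
      fun y => ((Matrix.mulVecLin E₃).toContinuousLinearMap).le_opNorm y⟩
  obtain ⟨C, hC, hC'⟩ : ∃ C, 0 ≤ C ∧ ∀ w : Fin a → ℝ, ‖w‖ ≤ C * ‖E₄.mulVec w‖ := by
    have hinj : Function.Injective (Matrix.mulVecLin E₄) := by
      rw [← LinearMap.ker_eq_bot, LinearMap.ker_eq_bot']
      intro m hm
      exact hE₄ m hm
    set e := LinearEquiv.ofInjective (Matrix.mulVecLin E₄) hinj with he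
    set ginv : (LinearMap.range (Matrix.mulVecLin E₄)) →L[ℝ] (Fin a → ℝ) :=
      (e.symm.toLinearMap).toContinuousLinearMap with hg
    refine ⟨‖ginv‖, ginv.opNorm_nonneg, fun w => ?_⟩
    have h1 : w = ginv ⟨E₄.mulVec w, ⟨w, rfl⟩⟩ := by
      have h2 : (⟨E₄.mulVec w, ⟨w, rfl⟩⟩ : LinearMap.range (Matrix.mulVecLin E₄)) = e w := by
        ext
        simp [he, LinearEquiv.ofInjective_apply]
      rw [h2]
      simp [hg]
    calc ‖w‖ = ‖ginv ⟨E₄.mulVec w, ⟨w, rfl⟩⟩‖ := by rw [← h1]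
      _ ≤ ‖ginv‖ * ‖(⟨E₄.mulVec w, ⟨w, rfl⟩⟩ : LinearMap.range (Matrix.mulVecLin E₄))‖ :=
          ginv.le_opNorm _
      _ = ‖ginv‖ * ‖E₄.mulVec w‖ := rfl
  set K : ℝ := N₁ + N₂ * (C * N₃) with hKdef
  have hKnn : 0 ≤ K := by positivity
  refine ⟨1 / (K + 1), by positivity, ?_⟩
  intro h hh hh0 x hx
  set u : Fin n → ℝ := x ∘ Sum.inl with hu
  set v : Fin a → ℝ := x ∘ Sum.inr with hv
  rw [Matrix.fromBlocks_mulVec] at hx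
  have eq1 : (h • E₁ - 1).mulVec u + (h • E₂).mulVec v = 0 :=
    funext fun i => congrFun hx (Sum.inl i)
  have eq2 : E₃.mulVec u + E₄.mulVec v = 0 :=
    funext fun i => congrFun hx (Sum.inr i)
  have eq1' : u = h • E₁.mulVec u + h • E₂.mulVec v := by
    rw [Matrix.sub_mulVec, Matrix.smul_mulVec, Matrix.smul_mulVec,
      Matrix.one_mulVec] at eq1
    funext i
    have h2 := congrFun eq1 i
    simp only [Pi.add_apply, Pi.sub_apply, Pi.smul_apply, Pi.zero_apply, smul_eq_mul] at h2 ⊢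
    linarith
  have hE₄v : E₄.mulVec v = -(E₃.mulVec u) := by
    rw [eq_neg_iff_add_eq_zero, add_comm]
    exact eq2
  have hbv : ‖v‖ ≤ C * (N₃ * ‖u‖) := by
    calc ‖v‖ ≤ C * ‖E₄.mulVec v‖ := hC' v
      _ = C * ‖E₃.mulVec u‖ := by rw [hE₄v, norm_neg]
      _ ≤ C * (N₃ * ‖u‖) := mul_le_mul_of_nonneg_left (hN₃' u) hC
  have hun : ‖u‖ ≤ h * K * ‖u‖ := by
    have hstep : ‖u‖ ≤ h * ‖E₁.mulVec u‖ + h * ‖E₂.mulVec v‖ := by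
      calc ‖u‖ = ‖h • E₁.mulVec u + h • E₂.mulVec v‖ := by rw [← eq1']
        _ ≤ ‖h • E₁.mulVec u‖ + ‖h • E₂.mulVec v‖ := norm_add_le _ _
        _ = h * ‖E₁.mulVec u‖ + h * ‖E₂.mulVec v‖ := by
            rw [norm_smul, norm_smul, Real.norm_eq_abs, abs_of_pos hh]
    have h1 := hN₁' u
    have h2 : ‖E₂.mulVec v‖ ≤ N₂ * (C * (N₃ * ‖u‖)) :=
      le_trans (hN₂' v) (mul_le_mul_of_nonneg_left hbv hN₂)
    rw [hKdef]
    nlinarith [norm_nonneg u, hh.le]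
  have hukey : h * K < 1 := by
    have h3 : h * (K + 1) < (1 / (K + 1)) * (K + 1) := by
      apply mul_lt_mul_of_pos_right hh0
      linarith
    rw [one_div_mul_cancel (by linarith : K + 1 ≠ 0)] at h3
    nlinarith
  have hu0 : u = 0 := by
    by_contra hne
    have : 0 < ‖u‖ := norm_pos_iff.mpr hne
    nlinarith
  have hv0 : v = 0 := by
    apply hE₄
    rw [hE₄v, hu0, Matrix.mulVec_zero, neg_zero]
  funext i
  rcases i with i | j
  · exact congrFun hu0 i
  · exact congrFun hv0 j
end

section
/- Schur-complement inversion identity for the information matrix: let S = EᵀQ⁻¹E + CᵀR⁻¹C, B = EᵀQ⁻¹A, D = AᵀQ⁻¹A + P⁻¹, with Q, R, P symmetric positive definite, [E; C] full column rank. Then the top-left block of the inverse of [[S, B],[Bᵀ, D]] equals (Eᵀ(Q + A P Aᵀ)⁻¹E + CᵀR⁻¹C)⁻¹. -/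
open Matrix

private lemma quad_eq {k n : ℕ} (M : Matrix (Fin k) (Fin n) ℝ)
    (G : Matrix (Fin k) (Fin k) ℝ) (x : Fin n → ℝ) :
    x ⬝ᵥ (Mᵀ * G * M) *ᵥ x = (M *ᵥ x) ⬝ᵥ G *ᵥ (M *ᵥ x) := by
  rw [← Matrix.mulVec_mulVec, ← Matrix.mulVec_mulVec, Matrix.dotProduct_mulVec,
    Matrix.vecMul_transpose]

private lemma sum_posDef {k q n : ℕ} {E : Matrix (Fin k) (Fin n) ℝ}
    {C : Matrix (Fin q) (Fin n) ℝ} {G : Matrix (Fin k) (Fin k) ℝ}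
    {H : Matrix (Fin q) (Fin q) ℝ} (hG : G.PosDef) (hH : H.PosDef)
    (hrank : ∀ x : Fin n → ℝ, E.mulVec x = 0 → C.mulVec x = 0 → x = 0) :
    (Eᵀ * G * E + Cᵀ * H * C).PosDef := by
  have hE : Eᵀ = Eᴴ := by ext i j; simp [Matrix.conjTranspose]
  have hC : Cᵀ = Cᴴ := by ext i j; simp [Matrix.conjTranspose]
  have h1 : (Eᵀ * G * E).PosSemidef := by
    rw [hE]; exact hG.posSemidef.conjTranspose_mul_mul_same E
  have h2 : (Cᵀ * H * C).PosSemidef := by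
    rw [hC]; exact hH.posSemidef.conjTranspose_mul_mul_same C
  refine Matrix.PosDef.of_dotProduct_mulVec_pos (h1.isHermitian.add h2.isHermitian) fun x hx => ?_
  have hsx : star x = x := by simp
  rw [Matrix.add_mulVec, dotProduct_add, hsx]
  by_cases hEx : E *ᵥ x = 0
  · have hCx : C *ᵥ x ≠ 0 := fun h => hx (hrank x hEx h)
    have t1 : x ⬝ᵥ (Eᵀ * G * E) *ᵥ x = 0 := by
      rw [quad_eq, hEx]; simp
    have t2 : 0 < x ⬝ᵥ (Cᵀ * H * C) *ᵥ x := by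
      rw [quad_eq]
      have := hH.dotProduct_mulVec_pos hCx
      simpa using this
    linarith
  · have t1 : 0 < x ⬝ᵥ (Eᵀ * G * E) *ᵥ x := by
      rw [quad_eq]
      have := hG.dotProduct_mulVec_pos hEx
      simpa using this
    have t2 : 0 ≤ x ⬝ᵥ (Cᵀ * H * C) *ᵥ x := by
      have := h2.dotProduct_mulVec_nonneg x
      simpa [hsx] using this
    linarith

theorem stmt_13 (p q n m : ℕ)
    (E : Matrix (Fin p) (Fin n) ℝ) (A : Matrix (Fin p) (Fin m) ℝ)
    (C : Matrix (Fin q) (Fin n) ℝ)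
    (Q : Matrix (Fin p) (Fin p) ℝ) (R : Matrix (Fin q) (Fin q) ℝ)
    (P : Matrix (Fin m) (Fin m) ℝ)
    (hQ : Q.PosDef) (hR : R.PosDef) (hP : P.PosDef)
    (hrank : ∀ x : Fin n → ℝ, E.mulVec x = 0 → C.mulVec x = 0 → x = 0) :
    ((Matrix.fromBlocks
        (Eᵀ * Q⁻¹ * E + Cᵀ * R⁻¹ * C) (Eᵀ * Q⁻¹ * A)
        (Aᵀ * Q⁻¹ * E) (Aᵀ * Q⁻¹ * A + P⁻¹))⁻¹).toBlocks₁₁ =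
      (Eᵀ * (Q + A * P * Aᵀ)⁻¹ * E + Cᵀ * R⁻¹ * C)⁻¹ := by
  have hAT : Aᵀ = Aᴴ := by ext i j; simp [Matrix.conjTranspose]
  -- Positive definiteness facts
  have hQi : (Q⁻¹).PosDef := hQ.inv
  have hPi : (P⁻¹).PosDef := hP.inv
  have hAPA : (A * P * Aᵀ).PosSemidef := by
    rw [hAT]; exact hP.posSemidef.mul_mul_conjTranspose_same A
  have hQAPA : (Q + A * P * Aᵀ).PosDef := hQ.add_posSemidef hAPA
  have hG : ((Q + A * P * Aᵀ)⁻¹).PosDef := hQAPA.inv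
  have hAQA : (Aᵀ * Q⁻¹ * A).PosSemidef := by
    rw [hAT]; exact hQi.posSemidef.conjTranspose_mul_mul_same A
  have hD : (Aᵀ * Q⁻¹ * A + P⁻¹).PosDef := Matrix.PosDef.posSemidef_add hAQA hPi
  have hD' : (P⁻¹ + Aᵀ * Q⁻¹ * A).PosDef := by
    rwa [add_comm] at hD
  -- Woodbury
  have hwood : (Q + A * P * Aᵀ)⁻¹
      = Q⁻¹ - Q⁻¹ * A * ((P⁻¹ + Aᵀ * Q⁻¹ * A))⁻¹ * Aᵀ * Q⁻¹ :=
    Matrix.add_mul_mul_inv_eq_sub Q A P Aᵀ hQ.isUnit hP.isUnit hD'.isUnit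
  -- Schur complement equals target matrix
  have hDD : (Aᵀ * Q⁻¹ * A + P⁻¹) = (P⁻¹ + Aᵀ * Q⁻¹ * A) := add_comm _ _
  have hschur :
      (Eᵀ * Q⁻¹ * E + Cᵀ * R⁻¹ * C)
        - (Eᵀ * Q⁻¹ * A) * (Aᵀ * Q⁻¹ * A + P⁻¹)⁻¹ * (Aᵀ * Q⁻¹ * E)
      = Eᵀ * (Q + A * P * Aᵀ)⁻¹ * E + Cᵀ * R⁻¹ * C := by
    rw [hwood, hDD]
    simp only [Matrix.mul_sub, Matrix.sub_mul, Matrix.mul_assoc]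
    abel
  have hSig : (Eᵀ * (Q + A * P * Aᵀ)⁻¹ * E + Cᵀ * R⁻¹ * C).PosDef :=
    sum_posDef hG hR.inv hrank
  -- Invertibility instances
  letI iD : Invertible (Aᵀ * Q⁻¹ * A + P⁻¹) := hD.isUnit.invertible
  have hinvD : ⅟(Aᵀ * Q⁻¹ * A + P⁻¹) = (Aᵀ * Q⁻¹ * A + P⁻¹)⁻¹ :=
    invOf_eq_nonsing_inv _
  have hschur' :
      (Eᵀ * Q⁻¹ * E + Cᵀ * R⁻¹ * C)
        - (Eᵀ * Q⁻¹ * A) * ⅟(Aᵀ * Q⁻¹ * A + P⁻¹) * (Aᵀ * Q⁻¹ * E)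
      = Eᵀ * (Q + A * P * Aᵀ)⁻¹ * E + Cᵀ * R⁻¹ * C := by
    rw [hinvD]; exact hschur
  letI iS : Invertible ((Eᵀ * Q⁻¹ * E + Cᵀ * R⁻¹ * C)
        - (Eᵀ * Q⁻¹ * A) * ⅟(Aᵀ * Q⁻¹ * A + P⁻¹) * (Aᵀ * Q⁻¹ * E)) := by
    rw [hschur']; exact hSig.isUnit.invertible
  letI iM : Invertible (Matrix.fromBlocks
        (Eᵀ * Q⁻¹ * E + Cᵀ * R⁻¹ * C) (Eᵀ * Q⁻¹ * A)
        (Aᵀ * Q⁻¹ * E) (Aᵀ * Q⁻¹ * A + P⁻¹)) :=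
    Matrix.fromBlocks₂₂Invertible _ _ _ _
  rw [← invOf_eq_nonsing_inv, Matrix.invOf_fromBlocks₂₂_eq,
    Matrix.toBlocks_fromBlocks₁₁, invOf_eq_nonsing_inv, hschur']
end
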